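/- arXiv:0811.4428 — 7 statements merged into one kernel-verified Lean document; each statement's English description precedes it below -/
import Mathlib

section
/- Let H be a complex Hilbert space, let Q : H →L H be a continuous linear map with Q ∘ Q = id, and let θ ∈ ℝ. On the Hilbert space H × H (the state space of a control qubit together with the system, where (φ₀, φ₁) represents |0⟩⊗φ₀ + |1⟩⊗φ₁), define the controlled query C_Q : (φ₀, φ₁) ↦ (φ₀, Qφ₁), and define R⊗I : (φ₀, φ₁) ↦ ( ((1+e^{−iθ})/2)φ₀ + ((1−e^{−iθ})/2)φ₁ , ((1−e^{−iθ})/2)φ₀ + ((1+e^{−iθ})/2)φ₁ ), which is the action of R = exp(−iθ(I−σ_x)/2) on the control qubit. Then for every ψ ∈ H, C_Q ∘ (R⊗I) ∘ C_Q applied to (ψ, ψ) equals (Uψ, Uψ), where U = exp(−iθ(I−Q)/2) = ((1+e^{−iθ})/2)·I + ((1−e^{−iθ})/2)·Q. (This is the exact simulation of the fractional query Q^θ = exp(−iθ(I−Q)/2) by two controlled full queries, with control qubit starting and ending in |+⟩, Fig. 3 of the paper.) -/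
/-!
`(1 - Q)/2` is idempotent when `Q` is an involution, and the exponential of a multiple `c • P`
of an idempotent collapses to `1 + (eᶜ - 1) • P`: this gives the closed form of `U`. In the circuit,
the two controlled queries act as `Q` on the second component only, and `Q² = 1` turns
`R ∘ C_Q (ψ, ψ)` into a pair whose components both become `Uψ` after the second `C_Q`.
-/

open Complex Nat

theorem IsIdempotentElem.half_smul_one_sub_of_mul_self_eq_one {𝕜 A : Type*} [Field 𝕜]
    [CharZero 𝕜] [Ring A] [Algebra 𝕜 A] {Q : A} (hQ : Q * Q = 1) :
    IsIdempotentElem ((2 : 𝕜)⁻¹ • (1 - Q)) := by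
  have hsq : (1 - Q) * (1 - Q) = (2 : 𝕜) • (1 - Q) := by
    rw [show (1 - Q) * (1 - Q) = 1 - Q - Q + Q * Q by noncomm_ring, hQ]
    module
  rw [IsIdempotentElem, smul_mul_smul_comm, hsq, smul_smul]
  norm_num

theorem IsIdempotentElem.exp_smul {A : Type*} [NormedRing A] [NormedAlgebra ℂ A] {P : A}
    (hP : IsIdempotentElem P) (c : ℂ) :
    NormedSpace.exp (c • P) = 1 + (Complex.exp c - 1) • P := by
  have hscalar : HasSum (fun n => ((n + 1)! ⁻¹ : ℂ) • c ^ (n + 1)) (Complex.exp c - 1) := by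
    have h := NormedSpace.exp_series_hasSum_exp' (𝕂 := ℂ) c
    rw [← Complex.exp_eq_exp_ℂ] at h
    simpa using (hasSum_nat_add_iff' 1).2 h
  have hterm : ∀ n : ℕ, ((n + 1)! ⁻¹ : ℂ) • (c • P) ^ (n + 1)
      = (((n + 1)! ⁻¹ : ℂ) • c ^ (n + 1)) • P := fun n => by
    rw [smul_pow, hP.pow_succ_eq, smul_smul, smul_eq_mul]
  have hseries : HasSum (fun n => (n ! ⁻¹ : ℂ) • (c • P) ^ n) (1 + (Complex.exp c - 1) • P) := by
    refine (hasSum_nat_add_iff' 1).1 ?_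
    simpa only [hterm, Finset.range_one, Finset.sum_singleton, pow_zero, Nat.factorial_zero,
      Nat.cast_one, inv_one, one_smul, add_sub_cancel_left] using hscalar.smul_const P
  rw [NormedSpace.exp_eq_tsum ℂ]
  exact hseries.tsum_eq

theorem fractional_query_exact_simulation_general
    {H : Type*} [NormedAddCommGroup H] [InnerProductSpace ℂ H]
    (Q : H →L[ℂ] H) (hQ : Q ∘L Q = 1) (θ : ℝ)
    (CQ : H × H → H × H)
    (hCQ : ∀ φ₀ φ₁ : H, CQ (φ₀, φ₁) = (φ₀, Q φ₁))
    (R : H × H → H × H)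
    (hR : ∀ φ₀ φ₁ : H, R (φ₀, φ₁) =
      (((1 + Complex.exp (-(θ : ℂ) * Complex.I)) / 2) • φ₀ +
         ((1 - Complex.exp (-(θ : ℂ) * Complex.I)) / 2) • φ₁,
       ((1 - Complex.exp (-(θ : ℂ) * Complex.I)) / 2) • φ₀ +
         ((1 + Complex.exp (-(θ : ℂ) * Complex.I)) / 2) • φ₁))
    (U : H →L[ℂ] H)
    (hU : U = NormedSpace.exp (((-(θ : ℂ) * Complex.I) / 2) • ((1 : H →L[ℂ] H) - Q))) :
    U = ((1 + Complex.exp (-(θ : ℂ) * Complex.I)) / 2) • (1 : H →L[ℂ] H) +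
          ((1 - Complex.exp (-(θ : ℂ) * Complex.I)) / 2) • Q ∧
      ∀ ψ : H, CQ (R (CQ (ψ, ψ))) = (U ψ, U ψ) := by
  set c : ℂ := -(θ : ℂ) * Complex.I
  have hP := IsIdempotentElem.half_smul_one_sub_of_mul_self_eq_one (𝕜 := ℂ) (Q := Q) hQ
  have hUform : U = ((1 + Complex.exp c) / 2) • (1 : H →L[ℂ] H) +
      ((1 - Complex.exp c) / 2) • Q := by
    rw [hU, show (c / 2) • ((1 : H →L[ℂ] H) - Q) = c • (2 : ℂ)⁻¹ • (1 - Q) by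
      rw [smul_smul, div_eq_mul_inv], hP.exp_smul]
    module
  refine ⟨hUform, fun ψ => ?_⟩
  have hQQ : ∀ x : H, Q (Q x) = x := fun x => congr($hQ x)
  rw [hCQ, hR, hCQ, hUform]
  simp [hQQ, add_comm]

/-- Exact simulation of the fractional query `Q^θ = exp(-iθ(I-Q)/2)` by two controlled
full queries, with the control qubit starting and ending in `|+⟩` (Fig. 3). -/
theorem fractional_query_exact_simulation
    {H : Type*} [NormedAddCommGroup H] [InnerProductSpace ℂ H] [CompleteSpace H]
    (Q : H →L[ℂ] H) (hQ : Q ∘L Q = 1) (θ : ℝ)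
    (CQ : H × H → H × H)
    (hCQ : ∀ φ₀ φ₁ : H, CQ (φ₀, φ₁) = (φ₀, Q φ₁))
    (R : H × H → H × H)
    (hR : ∀ φ₀ φ₁ : H, R (φ₀, φ₁) =
      (((1 + Complex.exp (-(θ : ℂ) * Complex.I)) / 2) • φ₀ +
         ((1 - Complex.exp (-(θ : ℂ) * Complex.I)) / 2) • φ₁,
       ((1 - Complex.exp (-(θ : ℂ) * Complex.I)) / 2) • φ₀ +
         ((1 + Complex.exp (-(θ : ℂ) * Complex.I)) / 2) • φ₁))
    (U : H →L[ℂ] H)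
    (hU : U = NormedSpace.exp (((-(θ : ℂ) * Complex.I) / 2) • ((1 : H →L[ℂ] H) - Q))) :
    U = ((1 + Complex.exp (-(θ : ℂ) * Complex.I)) / 2) • (1 : H →L[ℂ] H) +
          ((1 - Complex.exp (-(θ : ℂ) * Complex.I)) / 2) • Q ∧
      ∀ ψ : H, CQ (R (CQ (ψ, ψ))) = (U ψ, U ψ) :=
  fractional_query_exact_simulation_general Q hQ θ CQ hCQ R hR U hU
end

section
/- Let H be a complex Hilbert space, Q : H →L H a continuous linear map, and θ ∈ (0, π/2]. Set c = √(cos(θ/2)), s = √(sin(θ/2)) and v = cos(θ/2) + sin(θ/2). On H × H (control qubit plus system, where (φ₀, φ₁) represents |0⟩⊗φ₀ + |1⟩⊗φ₁), define: (R₁⊗I)(φ₀, φ₁) with the property (R₁⊗I)(ψ, 0) = (1/√v)(c·ψ, i·s·ψ); the controlled query C_Q(φ₀, φ₁) = (φ₀, Qφ₁); and (R₂⊗I)(φ₀, φ₁) = ( (1/√v)(c·φ₀ + s·φ₁), (1/√v)(s·φ₀ − c·φ₁) ). If moreover Q ∘ Q = id, then for every ψ ∈ H, (R₂⊗I) ∘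 C_Q ∘ (R₁⊗I) applied to (ψ, 0) equals (1/v)·( e^{iθ/2}·exp(−iθ(I−Q)/2)ψ , √(sin θ)·e^{−iπ/4}·exp(i(π/2)(I−Q)/2)ψ ). (This is Eq. (21): the probabilistic simulation of the fractional query Q^θ by a single controlled full query; conditional on the control measuring 0 the system is in state Q^θψ, and conditional on measuring 1 it is in state Q^{−π/2}ψ, up to global phases.) -/
/-!
Since `Q² = 1`, every vector splits as `(ψ + Qψ)/2 + (ψ - Qψ)/2`, a sum of eigenvectors of
`1 - Q` with eigenvalues `0` and `2`, so `exp (a • (1 - Q))` acts on them by `1` and `e^{2a}`.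
Hence the phase-corrected fractional query `e^{it} exp (-it (1 - Q))` is `cos t + i sin t · Q`.
The circuit produces the amplitudes `c² = cos (θ/2)`, `s² = sin (θ/2)` on control `0` and
`± sc = ± √(sin θ) · (√2/2)` on control `1`, which are the cases `t = θ/2` and `t = -π/4`.
-/

open Complex

theorem NormedSpace.exp_apply_of_apply_eq_smul {𝕂 E : Type*} [RCLike 𝕂] [NormedAddCommGroup E]
    [NormedSpace 𝕂 E] [CompleteSpace E] {A : E →L[𝕂] E} {μ : 𝕂} {x : E} (hx : A x = μ • x) :
    exp A x = exp μ • x := by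
  have hpow (n : ℕ) : (A ^ n) x = μ ^ n • x := by
    induction n with
    | zero => simp
    | succ n ih =>
      rw [pow_succ']
      change A ((A ^ n) x) = _
      rw [ih, map_smul, hx, smul_smul, pow_succ]
  have hA := (exp_series_hasSum_exp' (𝕂 := 𝕂) A).mapL (ContinuousLinearMap.apply 𝕂 E x)
  simp only [ContinuousLinearMap.apply_apply, FunLike.coe_smul, Pi.smul_apply, hpow,
    smul_smul] at hA
  exact hA.unique ((exp_series_hasSum_exp' (𝕂 := 𝕂) μ).smul_const x)

theorem exp_mul_I_smul_exp_smul_one_sub_apply_of_involutive {E : Type*} [NormedAddCommGroup E]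
    [NormedSpace ℂ E] [CompleteSpace E] {Q : E →L[ℂ] E} (hQ : Q ∘L Q = 1) (t : ℂ) (ψ : E) :
    exp (t * I) • NormedSpace.exp ((-t * I) • (1 - Q)) ψ = cos t • ψ + (sin t * I) • Q ψ := by
  have hQQ : Q (Q ψ) = ψ := congr($hQ ψ)
  have hplus : NormedSpace.exp ((-t * I) • (1 - Q)) (ψ + Q ψ) = ψ + Q ψ := by
    rw [NormedSpace.exp_apply_of_apply_eq_smul (μ := 0) ?_, NormedSpace.exp_zero, one_smul]
    simp [hQQ, add_comm]
  have hminus : NormedSpace.exp ((-t * I) • (1 - Q)) (ψ - Q ψ) =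
      exp (-t * I) ^ 2 • (ψ - Q ψ) := by
    rw [NormedSpace.exp_apply_of_apply_eq_smul (μ := 2 * (-t * I)) ?_, ← exp_eq_exp_ℂ,
      ← exp_nat_mul]
    · push_cast; rfl
    simp [hQQ]
    module
  have hψ : NormedSpace.exp ((-t * I) • (1 - Q)) ψ =
      (1 / 2 : ℂ) • (ψ + Q ψ) + (exp (-t * I) ^ 2 / 2) • (ψ - Q ψ) := by
    conv_lhs => rw [show ψ = (1 / 2 : ℂ) • (ψ + Q ψ) + (1 / 2 : ℂ) • (ψ - Q ψ) by module]
    rw [map_add, map_smul, map_smul, hplus, hminus, smul_smul, one_div_mul_eq_div]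
  have hinv : exp (-t * I) = (exp (t * I))⁻¹ := by rw [neg_mul, exp_neg]
  have hne := exp_ne_zero (t * I)
  rw [hψ, cos, sin, hinv]
  match_scalars
  · field_simp
  · field_simp
    linear_combination (exp (t * I) ^ 2 - 1) * I_sq

theorem exp_mul_I_div_two_smul_exp_smul_one_sub_apply_of_involutive {E : Type*}
    [NormedAddCommGroup E] [NormedSpace ℂ E] [CompleteSpace E] {Q : E →L[ℂ] E}
    (hQ : Q ∘L Q = 1) (θ : ℝ) (ψ : E) :
    exp (θ * I / 2) • NormedSpace.exp ((-θ * I / 2) • (1 - Q)) ψ =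
      (Real.cos (θ / 2) : ℂ) • ψ + (Real.sin (θ / 2) * I : ℂ) • Q ψ := by
  have h := exp_mul_I_smul_exp_smul_one_sub_apply_of_involutive hQ (θ / 2 : ℝ) ψ
  rw [← ofReal_cos, ← ofReal_sin, ofReal_div, ofReal_ofNat] at h
  rwa [show (θ : ℂ) * I / 2 = θ / 2 * I by ring, show -(θ : ℂ) * I / 2 = -(θ / 2) * I by ring]

theorem exp_neg_pi_mul_I_div_four_smul_exp_smul_one_sub_apply_of_involutive {E : Type*}
    [NormedAddCommGroup E] [NormedSpace ℂ E] [CompleteSpace E] {Q : E →L[ℂ] E}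
    (hQ : Q ∘L Q = 1) (ψ : E) :
    exp (-Real.pi * I / 4) • NormedSpace.exp ((Real.pi / 4 * I) • (1 - Q)) ψ =
      (√2 / 2 : ℂ) • (ψ - I • Q ψ) := by
  have h := exp_mul_I_smul_exp_smul_one_sub_apply_of_involutive hQ (-(Real.pi / 4) : ℝ) ψ
  rw [← ofReal_cos, ← ofReal_sin, Real.cos_neg, Real.sin_neg, Real.cos_pi_div_four,
    Real.sin_pi_div_four] at h
  rw [show -(Real.pi : ℂ) * I / 4 = (-(Real.pi / 4) : ℝ) * I by push_cast; ring,
    show (Real.pi : ℂ) / 4 * I = -((-(Real.pi / 4) : ℝ) : ℂ) * I by push_cast; ring, h]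
  push_cast
  module

theorem Real.sqrt_sin_mul_sqrt_two_div_two {θ : ℝ} (hsin : 0 ≤ Real.sin (θ / 2)) :
    √(Real.sin θ) * (√2 / 2) = √(Real.sin (θ / 2)) * √(Real.cos (θ / 2)) := by
  have h : √(Real.sin θ) = √2 * (√(Real.sin (θ / 2)) * √(Real.cos (θ / 2))) := by
    rw [← Real.sqrt_mul hsin, ← Real.sqrt_mul zero_le_two, ← mul_assoc, ← Real.sin_two_mul]
    ring_nf
  rw [h]
  linear_combination (√(Real.sin (θ / 2)) * √(Real.cos (θ / 2)) / 2) *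
    Real.mul_self_sqrt zero_le_two

/-- Probabilistic simulation of the fractional query `Q^θ` by a single controlled full
query (Eq. (21) / Fig. 4): applying `R₂ ∘ C_Q ∘ R₁` to `|0⟩⊗ψ` yields
`(1/v)( e^{iθ/2} Q^θ ψ  on control 0 ,  √(sin θ) e^{-iπ/4} Q^{-π/2} ψ  on control 1 )`,
where `Q^α = exp(-iα(I-Q)/2)`. -/
theorem fractional_query_probabilistic_simulation
    {H : Type*} [NormedAddCommGroup H] [InnerProductSpace ℂ H] [CompleteSpace H]
    (Q : H →L[ℂ] H) (θ : ℝ) (hθ : θ ∈ Set.Ioc 0 (Real.pi / 2))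
    (c s v : ℝ)
    (hc : c = Real.sqrt (Real.cos (θ / 2)))
    (hs : s = Real.sqrt (Real.sin (θ / 2)))
    (hv : v = Real.cos (θ / 2) + Real.sin (θ / 2))
    (R₁ CQ R₂ : H × H → H × H)
    (hR₁ : ∀ ψ : H, R₁ (ψ, 0) =
      (((1 / Real.sqrt v : ℝ) : ℂ) • ((c : ℂ) • ψ),
       ((1 / Real.sqrt v : ℝ) : ℂ) • ((Complex.I * (s : ℂ)) • ψ)))
    (hCQ : ∀ φ₀ φ₁ : H, CQ (φ₀, φ₁) = (φ₀, Q φ₁))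
    (hR₂ : ∀ φ₀ φ₁ : H, R₂ (φ₀, φ₁) =
      (((1 / Real.sqrt v : ℝ) : ℂ) • ((c : ℂ) • φ₀ + (s : ℂ) • φ₁),
       ((1 / Real.sqrt v : ℝ) : ℂ) • ((s : ℂ) • φ₀ - (c : ℂ) • φ₁)))
    (hQ : Q ∘L Q = 1) :
    ∀ ψ : H, R₂ (CQ (R₁ (ψ, 0))) =
      (((1 / v : ℝ) : ℂ) • (Complex.exp ((θ : ℂ) * Complex.I / 2) •
          (NormedSpace.exp (((-(θ : ℂ) * Complex.I) / 2) • ((1 : H →L[ℂ] H) - Q)) ψ)),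
       ((1 / v : ℝ) : ℂ) • (((Real.sqrt (Real.sin θ) : ℂ) *
          Complex.exp (-(Real.pi : ℂ) * Complex.I / 4)) •
          (NormedSpace.exp ((((Real.pi : ℂ) / 4) * Complex.I) • ((1 : H →L[ℂ] H) - Q)) ψ))) := by
  intro ψ
  obtain ⟨hθ₀, hθπ⟩ := hθ
  have hcos : 0 ≤ Real.cos (θ / 2) :=
    Real.cos_nonneg_of_mem_Icc ⟨by linarith [Real.pi_pos], by linarith [Real.pi_pos]⟩
  have hsin : 0 ≤ Real.sin (θ / 2) :=
    Real.sin_nonneg_of_nonneg_of_le_pi (by linarith) (by linarith [Real.pi_pos])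
  have hc2 : (c * c : ℂ) = cos (θ / 2) := by exact_mod_cast hc ▸ Real.mul_self_sqrt hcos
  have hs2 : (s * s : ℂ) = sin (θ / 2) := by exact_mod_cast hs ▸ Real.mul_self_sqrt hsin
  have hv2 : (1 / v : ℂ) = 1 / √v * (1 / √v) := by
    rw [one_div_mul_one_div, ← ofReal_mul, Real.mul_self_sqrt (by rw [hv]; positivity)]
  have hsc : (√(Real.sin θ) * (√2 / 2) : ℂ) = s * c := by
    rw [hs, hc]
    exact_mod_cast Real.sqrt_sin_mul_sqrt_two_div_two hsin
  rw [exp_mul_I_div_two_smul_exp_smul_one_sub_apply_of_involutive hQ,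
    mul_smul (√(Real.sin θ) : ℂ),
    exp_neg_pi_mul_I_div_four_smul_exp_smul_one_sub_apply_of_involutive hQ, hR₁, hCQ, hR₂]
  simp only [map_smul]
  ext <;> match_scalars <;> rw [hv2]
  · linear_combination (1 / √v * (1 / √v) : ℂ) * hc2
  · linear_combination (I / √v * (1 / √v) : ℂ) * hs2
  · linear_combination (-(1 / √v * (1 / √v)) : ℂ) * hsc
  · linear_combination (1 / √v * (1 / √v) * I : ℂ) * hsc
end

section
/- Let H be a complex Hilbert space and Q : H →L H a self-adjoint continuous linear map with Q ∘ Q = id. Let θ ∈ [0, π] and let ψ ∈ H be a unit vector. Then ‖(1/(cos(θ/2)+sin(θ/2)))·(cos(θ/2)·ψ + i·sin(θ/2)·Qψ)‖² = 1/(1 + sin θ), and 1/(1 + sin θ) ≥ 1 − θ. (This is the success probability p_s = 1/v² ≥ 1 − θ of the probabilistic simulation of a fractional query of angle θ in Fig. 4 of the paper; note it is independent of ψ.) -/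
/-!
Since `Q` is a self-adjoint involution it is unitary, so `‖Qψ‖ = 1`, and `⟪ψ, Qψ⟫` is real, so
the factor `i` makes `cos(θ/2) ψ` and `i sin(θ/2) Qψ` orthogonal over `ℝ`. Hence the bracket has
norm `cos² + sin² = 1`, and the success probability is `1 / v²` with
`v² = 1 + 2 sin(θ/2) cos(θ/2) = 1 + sin θ`. The bound `1 / (1 + sin θ) ≥ 1 - θ` follows from
`0 ≤ sin θ ≤ θ` when `θ ≤ 1` and is trivial otherwise.
-/

open Complex

namespace Real

theorem cos_half_add_sin_half_sq (θ : ℝ) : (cos (θ / 2) + sin (θ / 2)) ^ 2 = 1 + sin θ := by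
  have h := sin_two_mul (θ / 2)
  rw [mul_div_cancel₀ θ two_ne_zero] at h
  nlinarith [cos_sq_add_sin_sq (θ / 2)]

theorem one_sub_le_one_div_one_add_sin {θ : ℝ} (hθ : 0 ≤ θ) : 1 - θ ≤ 1 / (1 + sin θ) := by
  have hsin_pos : 0 ≤ 1 + sin θ := by linarith [neg_one_le_sin θ]
  rcases le_or_gt θ 1 with hθ1 | hθ1
  · have hsin_nonneg : 0 ≤ sin θ := sin_nonneg_of_nonneg_of_le_pi hθ (by linarith [pi_gt_three])
    rw [le_div_iff₀ (by linarith)]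
    nlinarith [sin_le hθ]
  · exact (sub_nonpos.mpr hθ1.le).trans (by positivity)

end Real

theorem ContinuousLinearMap.mem_unitary_of_isSelfAdjoint_of_comp_self {H : Type*}
    [NormedAddCommGroup H] [InnerProductSpace ℂ H] [CompleteSpace H] {Q : H →L[ℂ] H}
    (hQsa : IsSelfAdjoint Q) (hQ : Q ∘L Q = 1) : Q ∈ unitary (H →L[ℂ] H) :=
  Unitary.mem_iff.mpr ⟨by rw [hQsa.star_eq]; exact hQ, by rw [hQsa.star_eq]; exact hQ⟩

theorem norm_ofReal_smul_add_I_mul_ofReal_smul_sq {H : Type*} [SeminormedAddCommGroup H]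
    [InnerProductSpace ℂ H] {x y : H} (hxy : (inner ℂ x y).im = 0) (a b : ℝ) :
    ‖(a : ℂ) • x + (I * b) • y‖ ^ 2 = a ^ 2 * ‖x‖ ^ 2 + b ^ 2 * ‖y‖ ^ 2 := by
  have hcross : RCLike.re (inner ℂ ((a : ℂ) • x) ((I * b) • y)) = 0 := by
    rw [inner_smul_left, inner_smul_right]
    simp [hxy]
  rw [norm_add_sq (𝕜 := ℂ), hcross, norm_smul, norm_smul, norm_mul, norm_I, one_mul, norm_real,
    norm_real, Real.norm_eq_abs, Real.norm_eq_abs, mul_pow, mul_pow, sq_abs, sq_abs]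
  ring

/-- Success probability of the probabilistic fractional-query simulation:
`‖(1/v)(cos(θ/2)ψ + i sin(θ/2) Qψ)‖² = 1/(1 + sin θ) ≥ 1 - θ`. -/
theorem fractional_query_success_probability
    {H : Type*} [NormedAddCommGroup H] [InnerProductSpace ℂ H] [CompleteSpace H]
    (Q : H →L[ℂ] H) (hQsa : IsSelfAdjoint Q) (hQ : Q ∘L Q = 1)
    (θ : ℝ) (hθ : θ ∈ Set.Icc 0 Real.pi)
    (ψ : H) (hψ : ‖ψ‖ = 1) :
    ‖(((1 / (Real.cos (θ / 2) + Real.sin (θ / 2)) : ℝ) : ℂ)) •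
        (((Real.cos (θ / 2) : ℝ) : ℂ) • ψ +
          (Complex.I * ((Real.sin (θ / 2) : ℝ) : ℂ)) • Q ψ)‖ ^ 2
      = 1 / (1 + Real.sin θ) ∧
    1 / (1 + Real.sin θ) ≥ 1 - θ := by
  have hQψ : ‖Q ψ‖ = 1 := by
    rw [ContinuousLinearMap.norm_map_of_mem_unitary
      (ContinuousLinearMap.mem_unitary_of_isSelfAdjoint_of_comp_self hQsa hQ), hψ]
  have hbracket : ‖((Real.cos (θ / 2) : ℝ) : ℂ) • ψ +
      (I * ((Real.sin (θ / 2) : ℝ) : ℂ)) • Q ψ‖ ^ 2 = 1 := by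
    rw [norm_ofReal_smul_add_I_mul_ofReal_smul_sq (y := Q ψ) (hQsa.isSymmetric.im_inner_self_apply ψ), hψ,
      hQψ, one_pow, mul_one, mul_one, Real.cos_sq_add_sin_sq]
  refine ⟨?_, Real.one_sub_le_one_div_one_add_sin hθ.1⟩
  rw [norm_smul, mul_pow, hbracket, mul_one, norm_real, Real.norm_eq_abs, sq_abs, div_pow,
    one_pow, Real.cos_half_add_sin_half_sq]
end

section
/- Let H be a complex Hilbert space and let A, B : H →L H be self-adjoint continuous linear maps with ‖B‖ ≤ 1. Then for every δ ≥ 0, ‖exp(−iδ(A+B)) − exp(−iδA)·exp(−iδB)‖ ≤ 2δ²‖A‖. (This is the specialization of the Trotter error bound, Eq. (9) of the paper, to time-independent Hamiltonians: A plays the role of the driving Hamiltonian D and B the query Hamiltonian, which satisfies ‖H_x‖ ≤ 1.) -/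
/-!
Interpolate `f u = exp ((δ - u) (X + Y)) exp (u X) exp (u Y)` between `f 0 = exp (δ (X + Y))` and
`f δ = exp (δ X) exp (δ Y)`. Its derivative is `exp ((δ - u) (X + Y)) [exp (u X), Y] exp (u Y)`.
When every exponential is a contraction (here they are unitaries, the generators being
skew-adjoint), the commutator has norm at most `2 u ‖X‖ ‖Y‖`, so the mean value theorem bounds
the error by `2 ‖X‖ ‖Y‖ δ²`.
-/

open Complex NormedSpace

section CStarRing

variable {𝔸 : Type*} [NormedRing 𝔸] [NormedAlgebra ℝ 𝔸] [CompleteSpace 𝔸] [StarRing 𝔸]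
  [CStarRing 𝔸]

theorem norm_exp_le_one_of_mem_skewAdjoint {S : 𝔸} (hS : S ∈ skewAdjoint 𝔸) : ‖exp S‖ ≤ 1 := by
  let : NormedAlgebra ℚ 𝔸 := NormedAlgebra.restrictScalars ℚ ℝ 𝔸
  rcases subsingleton_or_nontrivial 𝔸 with _ | _
  · simp [Subsingleton.elim (exp S) 0]
  · exact (CStarRing.norm_of_mem_unitary (exp_mem_unitary_of_mem_skewAdjoint hS)).le

end CStarRing

section BanachAlgebra

variable {𝔸 : Type*} [NormedRing 𝔸] [NormedAlgebra ℝ 𝔸] [CompleteSpace 𝔸]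

theorem norm_exp_smul_mul_sub_mul_exp_smul_le {X : 𝔸} (hX : ∀ t : ℝ, 0 ≤ t → ‖exp (t • X)‖ ≤ 1)
    (Y : 𝔸) {s : ℝ} (hs : 0 ≤ s) :
    ‖exp (s • X) * Y - Y * exp (s • X)‖ ≤ 2 * ‖X‖ * ‖Y‖ * s := by
  have hderiv (t : ℝ) : HasDerivAt (fun u : ℝ ↦ exp (u • X) * Y - Y * exp (u • X))
      (exp (t • X) * X * Y - Y * (exp (t • X) * X)) t :=
    ((hasDerivAt_exp_smul_const X t).mul_const Y).sub
      ((hasDerivAt_exp_smul_const X t).const_mul Y)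
  have hbound (t : ℝ) (ht : t ∈ Set.Ico 0 s) :
      ‖exp (t • X) * X * Y - Y * (exp (t • X) * X)‖ ≤ 2 * ‖X‖ * ‖Y‖ := by
    have hexp := hX t ht.1
    calc ‖exp (t • X) * X * Y - Y * (exp (t • X) * X)‖
        ≤ ‖exp (t • X)‖ * ‖X‖ * ‖Y‖ + ‖Y‖ * (‖exp (t • X)‖ * ‖X‖) :=
          (norm_sub_le _ _).trans (add_le_add (norm_mul₃_le ..)
            ((norm_mul_le _ _).trans (by gcongr; exact norm_mul_le _ _)))
      _ ≤ 1 * ‖X‖ * ‖Y‖ + ‖Y‖ * (1 * ‖X‖) := by gcongr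
      _ = 2 * ‖X‖ * ‖Y‖ := by ring
  simpa using norm_image_sub_le_of_norm_deriv_le_segment'
    (fun t _ ↦ (hderiv t).hasDerivWithinAt) hbound s (Set.right_mem_Icc.mpr hs)

theorem hasDerivAt_exp_smul_mul_exp_smul_mul_exp_smul (X Y : 𝔸) (δ s : ℝ) :
    HasDerivAt (fun u : ℝ ↦ exp ((δ - u) • (X + Y)) * (exp (u • X) * exp (u • Y)))
      (exp ((δ - s) • (X + Y)) * ((exp (s • X) * Y - Y * exp (s • X)) * exp (s • Y))) s := by
  have hleft : HasDerivAt (fun u : ℝ ↦ exp ((δ - u) • (X + Y)))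
      ((-1 : ℝ) • (exp ((δ - s) • (X + Y)) * (X + Y))) s :=
    (hasDerivAt_exp_smul_const (X + Y) (δ - s)).scomp s ((hasDerivAt_id s).const_sub δ)
  convert hleft.mul ((hasDerivAt_exp_smul_const' X s).mul (hasDerivAt_exp_smul_const' Y s))
    using 1
  · rfl
  · simp only [Pi.mul_apply, neg_one_smul]
    noncomm_ring

theorem norm_exp_smul_add_sub_exp_smul_mul_exp_smul_le {X Y : 𝔸}
    (hX : ∀ t : ℝ, 0 ≤ t → ‖exp (t • X)‖ ≤ 1) (hY : ∀ t : ℝ, 0 ≤ t → ‖exp (t • Y)‖ ≤ 1)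
    (hXY : ∀ t : ℝ, 0 ≤ t → ‖exp (t • (X + Y))‖ ≤ 1) {δ : ℝ} (hδ : 0 ≤ δ) :
    ‖exp (δ • (X + Y)) - exp (δ • X) * exp (δ • Y)‖ ≤ 2 * ‖X‖ * ‖Y‖ * δ ^ 2 := by
  have hbound (s : ℝ) (hs : s ∈ Set.Ico 0 δ) :
      ‖exp ((δ - s) • (X + Y)) * ((exp (s • X) * Y - Y * exp (s • X)) * exp (s • Y))‖
        ≤ 2 * ‖X‖ * ‖Y‖ * δ :=
    calc _ ≤ ‖exp ((δ - s) • (X + Y))‖ * (‖exp (s • X) * Y - Y * exp (s • X)‖ * ‖exp (s • Y)‖) :=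
          (norm_mul_le _ _).trans (by gcongr; exact norm_mul_le _ _)
      _ ≤ 1 * (2 * ‖X‖ * ‖Y‖ * δ * 1) := by
          gcongr
          · exact hXY _ (sub_nonneg.mpr hs.2.le)
          · exact (norm_exp_smul_mul_sub_mul_exp_smul_le hX Y hs.1).trans (by gcongr; exact hs.2.le)
          · exact hY s hs.1
      _ = 2 * ‖X‖ * ‖Y‖ * δ := by ring
  have hmvt := norm_image_sub_le_of_norm_deriv_le_segment'
    (fun s _ ↦ (hasDerivAt_exp_smul_mul_exp_smul_mul_exp_smul X Y δ s).hasDerivWithinAt) hbound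
    δ (Set.right_mem_Icc.mpr hδ)
  rw [norm_sub_rev]
  simpa [pow_two, mul_assoc] using hmvt

end BanachAlgebra

/-- Trotter error bound (Eq. (9), time-independent case): for self-adjoint bounded
operators `A`, `B` with `‖B‖ ≤ 1` and `δ ≥ 0`,
`‖exp(-iδ(A+B)) - exp(-iδA) exp(-iδB)‖ ≤ 2δ²‖A‖`. -/
theorem trotter_error_bound
    {H : Type*} [NormedAddCommGroup H] [InnerProductSpace ℂ H] [CompleteSpace H]
    (A B : H →L[ℂ] H) (hA : IsSelfAdjoint A) (hB : IsSelfAdjoint B)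
    (hBnorm : ‖B‖ ≤ 1) (δ : ℝ) (hδ : 0 ≤ δ) :
    ‖NormedSpace.exp ((-(δ : ℂ) * Complex.I) • (A + B)) -
        NormedSpace.exp ((-(δ : ℂ) * Complex.I) • A) *
          NormedSpace.exp ((-(δ : ℂ) * Complex.I) • B)‖
      ≤ 2 * δ ^ 2 * ‖A‖ := by
  have hcontraction {Z : H →L[ℂ] H} (hZ : IsSelfAdjoint Z) (t : ℝ) (_ : 0 ≤ t) :
      ‖exp (t • (-I) • Z)‖ ≤ 1 :=
    norm_exp_le_one_of_mem_skewAdjoint <|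
      skewAdjoint.smul_mem t <| hZ.smul_mem_skewAdjoint <| by simp [skewAdjoint.mem_iff]
  have hsmul (Z : H →L[ℂ] H) : (-(δ : ℂ) * I) • Z = δ • (-I) • Z := by
    rw [← smul_assoc, Complex.real_smul]; ring_nf
  have htrotter := norm_exp_smul_add_sub_exp_smul_mul_exp_smul_le (hcontraction hA)
    (hcontraction hB) (by simpa only [smul_add] using hcontraction (hA.add hB)) hδ
  rw [hsmul, hsmul, hsmul, smul_add]
  calc _ ≤ 2 * ‖(-I) • A‖ * ‖(-I) • B‖ * δ ^ 2 := htrotter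
    _ ≤ 2 * ‖A‖ * 1 * δ ^ 2 := by simp only [norm_smul, norm_neg, norm_I, one_mul]; gcongr
    _ = 2 * δ ^ 2 * ‖A‖ := by ring
end

section
/- Let H be a complex Hilbert space, let A, B : H →L H be self-adjoint continuous linear maps with ‖B‖ ≤ 1, let T ≥ 0, and let p ≥ 1 be a natural number. Then ‖exp(−iT(A+B)) − (exp(−i(T/p)A)·exp(−i(T/p)B))^p‖ ≤ 2T²‖A‖/p. In particular, for every ε₁ > 0, if p ≥ 2T²‖A‖/√ε₁ then this error is at most √ε₁. (This is the discretization of a continuous-time query algorithm into p fractional-query steps, Eqs. (10)–(12) of the paper, in the time-independent case.) -/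
/-!
With `x = -iA` and `y = -iB` skew-adjoint, every `exp (s • x)`, `exp (s • y)`, `exp (s • (x + y))`
is unitary. One Trotter step is controlled through `F(u) = e^{u(x+y)} e^{-uy} e^{-ux}`: `F 0 = 1`,
`F(s) e^{sx} e^{sy} = e^{s(x+y)}`, and `F'(u) = e^{u(x+y)} [x, e^{-uy}] e^{-ux}` has norm at most
`2‖x‖‖y‖|u|` because `‖e^{-uy} - 1‖ ≤ |u|‖y‖`. The mean value theorem then bounds one step by
`2‖x‖‖y‖s²`, and products of unitaries telescope, `‖U^p - V^p‖ ≤ p‖U - V‖`, so `p` steps of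
length `T/p` cost at most `2‖A‖‖B‖T²/p`.
-/

open Complex NormedSpace Set

section BanachAlgebra

variable {𝕂 𝔸 : Type*} [RCLike 𝕂] [NormedRing 𝔸] [NormedAlgebra 𝕂 𝔸]

noncomputable def trotterQuotient (x y : 𝔸) (u : 𝕂) : 𝔸 :=
  exp (u • (x + y)) * exp (-u • y) * exp (-u • x)

theorem trotterQuotient_zero (x y : 𝔸) : trotterQuotient x y (0 : 𝕂) = 1 := by
  simp [trotterQuotient]

theorem hasDerivAt_trotterQuotient [CompleteSpace 𝔸] (x y : 𝔸) (u : 𝕂) :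
    HasDerivAt (trotterQuotient x y)
      (exp (u • (x + y)) * (x * exp (-u • y) - exp (-u • y) * x) * exp (-u • x)) u := by
  have hy : Commute y (exp (-u • y)) := ((Commute.refl y).smul_right _).exp_right
  have hx : Commute x (exp (-u • x)) := ((Commute.refl x).smul_right _).exp_right
  have hneg (z : 𝔸) : HasDerivAt (fun v : 𝕂 => exp (-v • z)) (-(exp (-u • z) * z)) u := by
    simpa [Function.comp_def] using
      (hasDerivAt_exp_smul_const z (-u)).scomp u (hasDerivAt_neg u)
  refine (((hasDerivAt_exp_smul_const (x + y) u).mul (hneg y)).mul (hneg x)).congr_deriv ?_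
  simp only [Pi.mul_apply]
  rw [← hy.eq, ← hx.eq]
  generalize exp (u • (x + y)) = a, exp (-u • y) = b, exp (-u • x) = c
  noncomm_ring

end BanachAlgebra

theorem norm_pow_sub_pow_le_of_mem_unitary {E : Type*} [NormedRing E] [StarRing E] [CStarRing E]
    {U V : E} (hU : U ∈ unitary E) (hV : V ∈ unitary E) (n : ℕ) :
    ‖U ^ n - V ^ n‖ ≤ n * ‖U - V‖ := by
  induction n with
  | zero => simp
  | succ n ih =>
    calc ‖U ^ (n + 1) - V ^ (n + 1)‖ = ‖U ^ n * (U - V) + (U ^ n - V ^ n) * V‖ := by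
          congr 1; noncomm_ring
      _ ≤ ‖U - V‖ + ‖U ^ n - V ^ n‖ := by
          grw [norm_add_le, CStarRing.norm_mem_unitary_mul _ (pow_mem hU n),
            CStarRing.norm_mul_mem_unitary _ hV]
      _ ≤ (n + 1 : ℕ) * ‖U - V‖ := by push_cast; linarith

section CStarAlgebra

variable {E : Type*} [CStarAlgebra E] {x y : E}

theorem exp_smul_mem_unitary (hx : x ∈ skewAdjoint E) (t : ℝ) : exp (t • x) ∈ unitary E :=
  let +nondep : NormedAlgebra ℚ E := .restrictScalars ℚ ℂ E
  exp_mem_unitary_of_mem_skewAdjoint (skewAdjoint.smul_mem t hx)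

theorem norm_exp_smul_sub_one_le (hx : x ∈ skewAdjoint E) (t : ℝ) :
    ‖exp (t • x) - 1‖ ≤ ‖x‖ * |t| := by
  simpa using convex_univ.norm_image_sub_le_of_norm_hasDerivWithin_le
    (fun u _ => (hasDerivAt_exp_smul_const x u).hasDerivWithinAt)
    (fun u _ => (CStarRing.norm_mem_unitary_mul x (exp_smul_mem_unitary hx u)).le)
    (mem_univ 0) (mem_univ t)

theorem norm_mul_exp_smul_sub_exp_smul_mul_le (hy : y ∈ skewAdjoint E) (x : E) (t : ℝ) :
    ‖x * exp (t • y) - exp (t • y) * x‖ ≤ 2 * ‖x‖ * ‖y‖ * |t| := by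
  calc ‖x * exp (t • y) - exp (t • y) * x‖
      = ‖x * (exp (t • y) - 1) - (exp (t • y) - 1) * x‖ := by congr 1; noncomm_ring
    _ ≤ ‖x‖ * ‖exp (t • y) - 1‖ + ‖exp (t • y) - 1‖ * ‖x‖ := by
        grw [norm_sub_le, norm_mul_le, norm_mul_le]
    _ ≤ 2 * ‖x‖ * ‖y‖ * |t| := by
        grw [norm_exp_smul_sub_one_le hy t]; linarith

theorem trotterQuotient_mul_exp_mul_exp (x y : E) (s : ℝ) :
    trotterQuotient x y s * (exp (s • x) * exp (s • y)) = exp (s • (x + y)) := by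
  let +nondep : NormedAlgebra ℚ E := .restrictScalars ℚ ℂ E
  have hinv (z : E) : exp (-s • z) * exp (s • z) = 1 := by
    rw [← exp_add_of_commute ((Commute.refl z).smul_left _ |>.smul_right _), neg_smul,
      neg_add_cancel, NormedSpace.exp_zero]
  rw [trotterQuotient, mul_assoc, ← mul_assoc (exp (-s • x)), hinv, one_mul, mul_assoc, hinv,
    mul_one]

theorem norm_trotterQuotient_sub_one_le (hx : x ∈ skewAdjoint E) (hy : y ∈ skewAdjoint E)
    (s : ℝ) : ‖trotterQuotient x y s - 1‖ ≤ 2 * ‖x‖ * ‖y‖ * s ^ 2 := by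
  have hderiv (u : ℝ) (hu : u ∈ uIcc 0 s) :
      ‖exp (u • (x + y)) * (x * exp (-u • y) - exp (-u • y) * x) * exp (-u • x)‖
        ≤ 2 * ‖x‖ * ‖y‖ * |s| := by
    rw [CStarRing.norm_mul_mem_unitary _ (exp_smul_mem_unitary hx _),
      CStarRing.norm_mem_unitary_mul _ (exp_smul_mem_unitary (add_mem hx hy) _)]
    grw [norm_mul_exp_smul_sub_exp_smul_mul_le hy x, abs_neg]
    have hus : |u| ≤ |s| := by simpa using abs_sub_left_of_mem_uIcc hu
    gcongr
  have hmvt := (convex_uIcc (0 : ℝ) s).norm_image_sub_le_of_norm_hasDerivWithin_le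
    (fun u _ => (hasDerivAt_trotterQuotient x y u).hasDerivWithinAt) hderiv
    left_mem_uIcc right_mem_uIcc
  rwa [trotterQuotient_zero, sub_zero, Real.norm_eq_abs, mul_assoc _ |s|, ← sq, sq_abs] at hmvt

theorem norm_exp_add_sub_exp_mul_exp_le (hx : x ∈ skewAdjoint E) (hy : y ∈ skewAdjoint E)
    (s : ℝ) : ‖exp (s • (x + y)) - exp (s • x) * exp (s • y)‖ ≤ 2 * ‖x‖ * ‖y‖ * s ^ 2 := by
  rw [← trotterQuotient_mul_exp_mul_exp, ← sub_one_mul, CStarRing.norm_mul_mem_unitary _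
    (mul_mem (exp_smul_mem_unitary hx s) (exp_smul_mem_unitary hy s))]
  exact norm_trotterQuotient_sub_one_le hx hy s

theorem norm_exp_add_sub_trotter_pow_le (hx : x ∈ skewAdjoint E) (hy : y ∈ skewAdjoint E)
    (t : ℝ) {n : ℕ} (hn : n ≠ 0) :
    ‖exp (t • (x + y)) - (exp ((t / n) • x) * exp ((t / n) • y)) ^ n‖
      ≤ 2 * ‖x‖ * ‖y‖ * t ^ 2 / n := by
  have hsplit : t • (x + y) = n • ((t / n) • (x + y)) := by
    rw [← Nat.cast_smul_eq_nsmul ℝ, smul_smul, mul_div_cancel₀ _ (Nat.cast_ne_zero.2 hn)]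
  let +nondep : NormedAlgebra ℚ E := .restrictScalars ℚ ℂ E
  rw [hsplit, NormedSpace.exp_nsmul]
  calc _ ≤ n * (2 * ‖x‖ * ‖y‖ * (t / n) ^ 2) := by
        grw [norm_pow_sub_pow_le_of_mem_unitary (exp_smul_mem_unitary (add_mem hx hy) _)
          (mul_mem (exp_smul_mem_unitary hx _) (exp_smul_mem_unitary hy _)),
          norm_exp_add_sub_exp_mul_exp_le hx hy]
    _ = 2 * ‖x‖ * ‖y‖ * t ^ 2 / n := by field_simp

theorem neg_ofReal_mul_I_smul (t : ℝ) (a : E) : (-(t : ℂ) * I) • a = t • ((-I) • a) := by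
  rw [← Complex.coe_smul, smul_smul, neg_mul, mul_neg]

theorem norm_exp_sub_trotter_pow_le_of_isSelfAdjoint {a b : E} (ha : IsSelfAdjoint a)
    (hb : IsSelfAdjoint b) (t : ℝ) {n : ℕ} (hn : n ≠ 0) :
    ‖exp ((-(t : ℂ) * I) • (a + b)) -
        (exp ((-((t / n : ℝ) : ℂ) * I) • a) * exp ((-((t / n : ℝ) : ℂ) * I) • b)) ^ n‖
      ≤ 2 * ‖a‖ * ‖b‖ * t ^ 2 / n := by
  have hskew {c : E} (hc : IsSelfAdjoint c) : (-I) • c ∈ skewAdjoint E :=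
    hc.smul_mem_skewAdjoint (by simp [skewAdjoint.mem_iff])
  simpa only [neg_ofReal_mul_I_smul, smul_add (-I), norm_smul, norm_neg, norm_I, one_mul] using
    norm_exp_add_sub_trotter_pow_le (hskew ha) (hskew hb) t hn

end CStarAlgebra

theorem trotter_discretization_general
    {H : Type*} [NormedAddCommGroup H] [InnerProductSpace ℂ H] [CompleteSpace H]
    (A B : H →L[ℂ] H) (hA : IsSelfAdjoint A) (hB : IsSelfAdjoint B)
    (hBnorm : ‖B‖ ≤ 1) (T : ℝ) (p : ℕ) (hp : 1 ≤ p) :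
    ‖NormedSpace.exp ((-(T : ℂ) * Complex.I) • (A + B)) -
        (NormedSpace.exp ((-((T / p : ℝ) : ℂ) * Complex.I) • A) *
          NormedSpace.exp ((-((T / p : ℝ) : ℂ) * Complex.I) • B)) ^ p‖
      ≤ 2 * T ^ 2 * ‖A‖ / p ∧
    ∀ ε₁ : ℝ, 0 < ε₁ → (p : ℝ) ≥ 2 * T ^ 2 * ‖A‖ / Real.sqrt ε₁ →
      ‖NormedSpace.exp ((-(T : ℂ) * Complex.I) • (A + B)) -
          (NormedSpace.exp ((-((T / p : ℝ) : ℂ) * Complex.I) • A) *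
            NormedSpace.exp ((-((T / p : ℝ) : ℂ) * Complex.I) • B)) ^ p‖
        ≤ Real.sqrt ε₁ := by
  have hbound : _ ≤ 2 * T ^ 2 * ‖A‖ / p := calc
    _ ≤ 2 * ‖A‖ * ‖B‖ * T ^ 2 / p :=
        norm_exp_sub_trotter_pow_le_of_isSelfAdjoint hA hB T (by omega)
    _ ≤ 2 * ‖A‖ * 1 * T ^ 2 / p := by gcongr
    _ = 2 * T ^ 2 * ‖A‖ / p := by ring
  refine ⟨hbound, fun ε₁ hε₁ hp_large => hbound.trans ?_⟩
  rw [ge_iff_le, div_le_iff₀ (Real.sqrt_pos.2 hε₁)] at hp_large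
  rw [div_le_iff₀ (by positivity)]
  linarith

/-- Discretization of a continuous-time query algorithm into `p` fractional-query steps
(Eqs. (10)–(12), time-independent case):
`‖exp(-iT(A+B)) - (exp(-i(T/p)A) exp(-i(T/p)B))^p‖ ≤ 2T²‖A‖/p`, and in particular the
error is at most `√ε₁` whenever `p ≥ 2T²‖A‖/√ε₁`. -/
theorem trotter_discretization
    {H : Type*} [NormedAddCommGroup H] [InnerProductSpace ℂ H] [CompleteSpace H]
    (A B : H →L[ℂ] H) (hA : IsSelfAdjoint A) (hB : IsSelfAdjoint B)
    (hBnorm : ‖B‖ ≤ 1) (T : ℝ) (hT : 0 ≤ T) (p : ℕ) (hp : 1 ≤ p) :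
    ‖NormedSpace.exp ((-(T : ℂ) * Complex.I) • (A + B)) -
        (NormedSpace.exp ((-((T / p : ℝ) : ℂ) * Complex.I) • A) *
          NormedSpace.exp ((-((T / p : ℝ) : ℂ) * Complex.I) • B)) ^ p‖
      ≤ 2 * T ^ 2 * ‖A‖ / p ∧
    ∀ ε₁ : ℝ, 0 < ε₁ → (p : ℝ) ≥ 2 * T ^ 2 * ‖A‖ / Real.sqrt ε₁ →
      ‖NormedSpace.exp ((-(T : ℂ) * Complex.I) • (A + B)) -
          (NormedSpace.exp ((-((T / p : ℝ) : ℂ) * Complex.I) • A) *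
            NormedSpace.exp ((-((T / p : ℝ) : ℂ) * Complex.I) • B)) ^ p‖
        ≤ Real.sqrt ε₁ :=
  trotter_discretization_general A B hA hB hBnorm T p hp
end

section
/- Let m, k be natural numbers and let B ∈ ℝ with 0 ≤ B ≤ 1. Then Σ_{j=k+1}^{m} C(m, j)·B^{j}·(1−B)^{m−j} ≤ ((mB)^{k+1}/(k+1)!)·e^{mB}. (This is the quantitative Poisson-type tail bound underlying Eqs. (28)–(29) of the paper: with mB ≈ 1/8 the truncation error of the control-qubit state decays like (1/8)^{k+1}/(k+1)!.) -/
/-!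
Drop the factor `(1 - B) ^ (m - j)` and use `C(m, j) ≤ m ^ j / j!`: each binomial term is at most
the Poisson weight `(mB) ^ j / j!` (without the `e^{-mB}`). Since `(k+1)! i! ≤ (k+1+i)!`, the tail
of the exponential series from `k+1` on is at most `(mB) ^ (k+1) / (k+1)!` times the whole series.
-/

open Finset Real Nat

theorem choose_mul_pow_mul_one_sub_pow_le_pow_div_factorial {p : ℝ} (hp0 : 0 ≤ p) (hp1 : p ≤ 1)
    (n j : ℕ) : (n.choose j : ℝ) * p ^ j * (1 - p) ^ (n - j) ≤ (n * p) ^ j / j ! :=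
  calc (n.choose j : ℝ) * p ^ j * (1 - p) ^ (n - j) ≤ (n.choose j : ℝ) * p ^ j :=
        mul_le_of_le_one_right (by positivity) (pow_le_one₀ (by linarith) (by linarith))
    _ ≤ (n : ℝ) ^ j / j ! * p ^ j := by gcongr; exact Nat.choose_le_pow_div j n
    _ = (n * p) ^ j / j ! := by rw [mul_pow]; ring

theorem pow_add_div_factorial_le {x : ℝ} (hx : 0 ≤ x) (a i : ℕ) :
    x ^ (a + i) / (a + i)! ≤ x ^ a / a ! * (x ^ i / i !) := by
  rw [div_mul_div_comm (x ^ a), ← pow_add]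
  gcongr
  exact_mod_cast Nat.le_of_dvd (factorial_pos _) (factorial_mul_factorial_dvd_factorial_add a i)

theorem sum_Ioc_pow_div_factorial_le {x : ℝ} (hx : 0 ≤ x) (k n : ℕ) :
    ∑ j ∈ Ioc k n, x ^ j / j ! ≤ x ^ (k + 1) / (k + 1)! * exp x := by
  have hIoc : Ioc k n = (range (n - k)).map (addLeftEmbedding (k + 1)) := by
    ext j; simp only [mem_Ioc, mem_map, mem_range, addLeftEmbedding_apply]
    constructor
    · intro hj; exact ⟨j - (k + 1), by omega, by omega⟩
    · rintro ⟨i, hi, rfl⟩; omega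
  calc ∑ j ∈ Ioc k n, x ^ j / j !
      = ∑ i ∈ range (n - k), x ^ (k + 1 + i) / (k + 1 + i)! := by rw [hIoc, sum_map]; rfl
    _ ≤ ∑ i ∈ range (n - k), x ^ (k + 1) / (k + 1)! * (x ^ i / i !) :=
        sum_le_sum fun i _ => pow_add_div_factorial_le hx _ i
    _ ≤ x ^ (k + 1) / (k + 1)! * exp x := by
        rw [← mul_sum]; gcongr; exact sum_le_exp_of_nonneg hx _

/-- Poisson-type tail bound for the binomial distribution (underlying Eqs. (28)–(29)):
`Σ_{j=k+1}^m C(m,j) B^j (1-B)^{m-j} ≤ ((mB)^{k+1}/(k+1)!) e^{mB}`. -/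
theorem binomial_tail_poisson_bound
    (m k : ℕ) (B : ℝ) (hB0 : 0 ≤ B) (hB1 : B ≤ 1) :
    ∑ j ∈ Finset.Ioc k m, (m.choose j : ℝ) * B ^ j * (1 - B) ^ (m - j)
      ≤ ((m * B) ^ (k + 1) / (Nat.factorial (k + 1) : ℝ)) * Real.exp (m * B) :=
  calc ∑ j ∈ Finset.Ioc k m, (m.choose j : ℝ) * B ^ j * (1 - B) ^ (m - j)
      ≤ ∑ j ∈ Finset.Ioc k m, ((m : ℝ) * B) ^ j / j ! :=
        sum_le_sum fun j _ => choose_mul_pow_mul_one_sub_pow_le_pow_div_factorial hB0 hB1 m j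
    _ ≤ _ := sum_Ioc_pow_div_factorial_le (by positivity) k m
end

section
/- Let m be a natural number, let q₁, …, q_m ≥ 0 and A, C₀, C₁, …, C_m ≥ 0 be real numbers satisfying: Σ_{α=1}^{m} q_α ≤ 1/4; Σ_{α=1}^{m} α·q_α ≤ 1/4; A ≤ 2; C_α ≤ C₀ + α·A for all 1 ≤ α ≤ m; and C₀ = Σ_{α=1}^{m} q_α·(C_α + C₀). Then C₀ ≤ 1. (This is the recursion of Subsection II D of the paper bounding the expected number of error-fixing operations Q_x^{±π/2}: q_α is the probability that a segment computation results in α errors, C_α is the expected cost of undoing α errors, A is the expected number of segment computations per segment, and the conclusion is that the expected number of Q_x^{±π/2} operations per original segment is at most 1.) -/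
/-! Bounding each `C α` by `C₀ + α A` turns the recursion into the linear inequality
`C₀ ≤ 2 (Σ q_α) C₀ + A Σ α q_α`, whose coefficient `2 Σ q_α ≤ 1/2` and constant term
`A Σ α q_α ≤ 1/2` add up to at most `1`; so `C₀ ≤ 1`. -/

theorem le_one_of_le_mul_add {c a b : ℝ} (h : c ≤ a * c + b) (ha : a < 1) (hab : a + b ≤ 1) :
    c ≤ 1 := by
  nlinarith

theorem Finset.sum_mul_add_le_of_le_add_mul {ι : Type*} (s : Finset ι) (q n c : ι → ℝ)
    (c₀ A : ℝ) (hq : ∀ i ∈ s, 0 ≤ q i) (hc : ∀ i ∈ s, c i ≤ c₀ + n i * A) :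
    ∑ i ∈ s, q i * (c i + c₀) ≤ 2 * (∑ i ∈ s, q i) * c₀ + A * ∑ i ∈ s, n i * q i := by
  calc ∑ i ∈ s, q i * (c i + c₀)
      ≤ ∑ i ∈ s, (2 * q i * c₀ + A * (n i * q i)) := by
        refine Finset.sum_le_sum fun i hi => ?_
        nlinarith [mul_le_mul_of_nonneg_left (hc i hi) (hq i hi)]
    _ = 2 * (∑ i ∈ s, q i) * c₀ + A * ∑ i ∈ s, n i * q i := by
        rw [Finset.sum_add_distrib, Finset.mul_sum, Finset.mul_sum, Finset.sum_mul]

theorem error_correction_cost_recursion_general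
    (m : ℕ) (q C : ℕ → ℝ) (A : ℝ)
    (hq : ∀ α ∈ Finset.Icc 1 m, 0 ≤ q α)
    (hA : A ≤ 2)
    (hqsum : ∑ α ∈ Finset.Icc 1 m, q α ≤ 1 / 4)
    (hqmean : ∑ α ∈ Finset.Icc 1 m, (α : ℝ) * q α ≤ 1 / 4)
    (hCα : ∀ α ∈ Finset.Icc 1 m, C α ≤ C 0 + (α : ℝ) * A)
    (hrec : C 0 = ∑ α ∈ Finset.Icc 1 m, q α * (C α + C 0)) :
    C 0 ≤ 1 := by
  have hmean_nonneg : 0 ≤ ∑ α ∈ Finset.Icc 1 m, (α : ℝ) * q α :=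
    Finset.sum_nonneg fun α hα => mul_nonneg α.cast_nonneg (hq α hα)
  have hlinear := hrec.trans_le <|
    Finset.sum_mul_add_le_of_le_add_mul _ q (fun α => (α : ℝ)) C (C 0) A hq hCα
  have hconst : A * ∑ α ∈ Finset.Icc 1 m, (α : ℝ) * q α ≤ 1 / 2 := by
    linarith [mul_le_mul_of_nonneg_right hA hmean_nonneg]
  exact le_one_of_le_mul_add hlinear (by linarith) (by linarith)

/-- Recursion of Subsection II D bounding the expected number of error-fixing
operations: given `Σ q_α ≤ 1/4`, `Σ α q_α ≤ 1/4`, `A ≤ 2`, `C_α ≤ C₀ + αA`, and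
`C₀ = Σ_{α=1}^m q_α (C_α + C₀)`, one has `C₀ ≤ 1`. -/
theorem error_correction_cost_recursion
    (m : ℕ) (q C : ℕ → ℝ) (A : ℝ)
    (hq : ∀ α ∈ Finset.Icc 1 m, 0 ≤ q α)
    (hC : ∀ α, α ≤ m → 0 ≤ C α)
    (hA0 : 0 ≤ A) (hA : A ≤ 2)
    (hqsum : ∑ α ∈ Finset.Icc 1 m, q α ≤ 1 / 4)
    (hqmean : ∑ α ∈ Finset.Icc 1 m, (α : ℝ) * q α ≤ 1 / 4)
    (hCα : ∀ α ∈ Finset.Icc 1 m, C α ≤ C 0 + (α : ℝ) * A)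
    (hrec : C 0 = ∑ α ∈ Finset.Icc 1 m, q α * (C α + C 0)) :
    C 0 ≤ 1 :=
  error_correction_cost_recursion_general m q C A hq hA hqsum hqmean hCα hrec
end
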